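/- arXiv:1401.2280 — 9 statements merged into one kernel-verified Lean document; each statement's English description precedes it below -/
import Mathlib

section
/- Let N ≥ 1 and let f, h : ℝ^N → ℝ be differentiable with ∇h(x) ≠ 0 for every x. Define u(x) = ∇h(x)/‖∇h(x)‖ and Ψ(x) = −h(x)·∇h(x) − (∇f(x) − ⟨∇f(x), u(x)⟩·u(x)). Then for every x ∈ ℝ^N, Ψ(x) = 0 if and only if h(x) = 0 and there exists λ ∈ ℝ such that ∇f(x) + λ·∇h(x) = 0. (Proposition 1.1, part 1: equilibria of Ψ are exactly the solutions of the KKT optimality conditions of the equality-constrained program 'minimize f subject to h = 0'.) -/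
open scoped RealInnerProductSpace

/-! With `u = ‖∇h‖⁻¹ • ∇h`, the second term of `Ψ` is `∇f - P ∇f` for the orthogonal projection `P`
onto the line `ℝ ∙ ∇h`. It lies in the orthogonal complement of that line while `h • ∇h` lies on it,
so `Ψ` vanishes iff both terms do: `h = 0` (as `∇h ≠ 0`) and `∇f ∈ ℝ ∙ ∇h`, which is the
multiplier condition. -/

theorem Submodule.add_sub_starProjection_eq_zero_iff {𝕜 E : Type*} [RCLike 𝕜]
    [NormedAddCommGroup E] [InnerProductSpace 𝕜 E] (K : Submodule 𝕜 E)
    [K.HasOrthogonalProjection] {y : E} (hy : y ∈ K) (v : E) :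
    y + (v - K.starProjection v) = 0 ↔ y = 0 ∧ v ∈ K := by
  constructor
  · intro hsum
    have hy0 : y = 0 := by
      have hy' : y ∈ Kᗮ := by
        rw [eq_neg_of_add_eq_zero_left hsum]
        exact neg_mem (K.sub_starProjection_mem_orthogonal v)
      exact Submodule.disjoint_def.mp K.orthogonal_disjoint y hy hy'
    rw [hy0, zero_add, sub_eq_zero] at hsum
    exact ⟨hy0, K.starProjection_eq_self_iff.mp hsum.symm⟩
  · rintro ⟨rfl, hv⟩
    rw [K.starProjection_eq_self_iff.mpr hv, sub_self, add_zero]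

theorem inner_smul_inv_norm_smul_eq_starProjection {E : Type*} [NormedAddCommGroup E]
    [InnerProductSpace ℝ E] {g : E} (hg : g ≠ 0) (v : E) :
    ⟪v, ‖g‖⁻¹ • g⟫ • (‖g‖⁻¹ • g) = (ℝ ∙ g).starProjection v := by
  rw [Submodule.starProjection_singleton, real_inner_smul_right, smul_smul, real_inner_comm]
  congr 1
  simp only [RCLike.ofReal_real_eq_id, id_eq]
  field_simp

theorem exists_add_smul_eq_zero_iff_mem_span_singleton {R M : Type*} [Ring R]
    [AddCommGroup M] [Module R M] (v g : M) :
    (∃ lam : R, v + lam • g = 0) ↔ v ∈ R ∙ g := by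
  rw [Submodule.mem_span_singleton]
  refine ⟨fun ⟨lam, hlam⟩ => ⟨-lam, ?_⟩, fun ⟨a, ha⟩ => ⟨-a, ?_⟩⟩
  · rwa [neg_smul, neg_eq_iff_eq_neg, ← add_eq_zero_iff_eq_neg']
  · rw [← ha, neg_smul, add_neg_cancel]

theorem stmt_0_general (N : ℕ)
    (f h : EuclideanSpace ℝ (Fin N) → ℝ)
    (hgrad : ∀ x, gradient h x ≠ 0)
    (u : EuclideanSpace ℝ (Fin N) → EuclideanSpace ℝ (Fin N))
    (hu : ∀ x, u x = ‖gradient h x‖⁻¹ • gradient h x)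
    (Ψ : EuclideanSpace ℝ (Fin N) → EuclideanSpace ℝ (Fin N))
    (hΨ : ∀ x, Ψ x =
      -(h x) • gradient h x - (gradient f x - ⟪gradient f x, u x⟫ • u x)) :
    ∀ x : EuclideanSpace ℝ (Fin N),
      Ψ x = 0 ↔ (h x = 0 ∧ ∃ lam : ℝ, gradient f x + lam • gradient h x = 0) := by
  intro x
  have hg := hgrad x
  have hΨx : Ψ x = -(h x • gradient h x + (gradient f x -
      (ℝ ∙ gradient h x).starProjection (gradient f x))) := by
    rw [hΨ x, hu x, inner_smul_inv_norm_smul_eq_starProjection hg, neg_add, neg_smul]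
    abel
  rw [hΨx, neg_eq_zero, Submodule.add_sub_starProjection_eq_zero_iff _
    (Submodule.smul_mem _ _ (Submodule.mem_span_singleton_self _)), smul_eq_zero_iff_left hg,
    exists_add_smul_eq_zero_iff_mem_span_singleton]

/-- Proposition 1.1, part 1: for the equality-constrained program
`minimize f subject to h = 0`, the equilibria of the field
`Ψ(x) = -h(x)•∇h(x) - (∇f(x) - ⟪∇f(x), u(x)⟫ • u(x))`, with
`u(x) = ∇h(x)/‖∇h(x)‖`, are exactly the solutions of the KKT conditions. -/
theorem stmt_0 (N : ℕ) (hN : 1 ≤ N)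
    (f h : EuclideanSpace ℝ (Fin N) → ℝ)
    (hf : Differentiable ℝ f) (hh : Differentiable ℝ h)
    (hgrad : ∀ x, gradient h x ≠ 0)
    (u : EuclideanSpace ℝ (Fin N) → EuclideanSpace ℝ (Fin N))
    (hu : ∀ x, u x = ‖gradient h x‖⁻¹ • gradient h x)
    (Ψ : EuclideanSpace ℝ (Fin N) → EuclideanSpace ℝ (Fin N))
    (hΨ : ∀ x, Ψ x =
      -(h x) • gradient h x - (gradient f x - ⟪gradient f x, u x⟫ • u x)) :
    ∀ x : EuclideanSpace ℝ (Fin N),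
      Ψ x = 0 ↔ (h x = 0 ∧ ∃ lam : ℝ, gradient f x + lam • gradient h x = 0) :=
  stmt_0_general N f h hgrad u hu Ψ hΨ
end

section
/- Let N, n ≥ 1, let f : ℝ^N → ℝ and h : ℝ^N → ℝ^n be differentiable, write Dh(x) for the n×N Jacobian matrix of h at x, and assume the n×n matrix Dh(x)·Dh(x)ᵀ is invertible for every x. Set H(x) = Dh(x)ᵀ·(Dh(x)·Dh(x)ᵀ)⁻¹·Dh(x) and Ψ(x) = −Dh(x)ᵀ·h(x) − (I − H(x))·∇f(x). Then for every x ∈ ℝ^N, Ψ(x) = 0 if and only if h(x) = 0 and there exists λ ∈ ℝ^n such that ∇f(x) + Dh(x)ᵀ·λ = 0. (Proposition 2.1: equilibria of Ψ are exactly the solutions of the KKT system ∇f(x) + λ·Dh(x) = 0, h(x) = 0 of the program 'minimize f subject to h = 0'.) -/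
open scoped Matrix

/-!
Write `A = Dh(x)`. Since `A Aᵀ` is invertible, `H = Aᵀ (A Aᵀ)⁻¹ A` satisfies `A H = A` and
`H Aᵀ = Aᵀ`, so `A (I - H) = 0` and `(I - H) Aᵀ = 0`. Applying `A` to `Aᵀ h + (I - H) ∇f = 0`
kills the second term and leaves `A Aᵀ h = 0`, hence `h = 0`; then `∇f = H ∇f` lies in the range
of `Aᵀ`, which is the multiplier condition. Conversely `I - H` annihilates `∇f = -Aᵀ λ`.
-/

namespace Matrix

variable {m n R : Type*} [Fintype m] [DecidableEq m] [Fintype n] [CommRing R]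
  {A : Matrix m n R} {B : Matrix n m R}

theorem mul_mul_inv_mul_mul_eq_self (hAB : IsUnit (A * B).det) : A * (B * (A * B)⁻¹ * A) = A := by
  rw [← Matrix.mul_assoc, ← Matrix.mul_assoc, mul_nonsing_inv _ hAB, Matrix.one_mul]

theorem mul_inv_mul_mul_eq_self (hAB : IsUnit (A * B).det) : B * (A * B)⁻¹ * A * B = B := by
  rw [Matrix.mul_assoc _ A B, nonsing_inv_mul_cancel_right _ _ hAB]

theorem mulVec_add_one_sub_mulVec_eq_zero_iff [DecidableEq n] (hAB : IsUnit (A * B).det) (b : m → R) (g : n → R) :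
    B *ᵥ b + (1 - B * (A * B)⁻¹ * A) *ᵥ g = 0 ↔ b = 0 ∧ ∃ lam : m → R, g + B *ᵥ lam = 0 := by
  constructor
  · intro hzero
    have hAB_b : (A * B) *ᵥ b = 0 := by
      have := congrArg (A *ᵥ ·) hzero
      simpa only [mulVec_add, mulVec_mulVec, Matrix.mul_sub, Matrix.mul_one,
        mul_mul_inv_mul_mul_eq_self hAB, sub_self, zero_mulVec, add_zero, mulVec_zero] using this
    have hb : b = 0 :=
      mulVec_injective_of_isUnit ((isUnit_iff_isUnit_det _).mpr hAB) (by rwa [mulVec_zero])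
    refine ⟨hb, -(((A * B)⁻¹ * A) *ᵥ g), ?_⟩
    rw [hb, mulVec_zero, zero_add, sub_mulVec, one_mulVec, sub_eq_zero] at hzero
    rw [mulVec_neg, mulVec_mulVec, ← Matrix.mul_assoc, ← hzero, add_neg_cancel]
  · rintro ⟨rfl, lam, hlam⟩
    have hP : (1 - B * (A * B)⁻¹ * A) * B = 0 := by
      rw [Matrix.sub_mul, Matrix.one_mul, mul_inv_mul_mul_eq_self hAB, sub_self]
    rw [eq_neg_of_add_eq_zero_left hlam, mulVec_zero, zero_add, mulVec_neg, mulVec_mulVec, hP,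
      zero_mulVec, neg_zero]

end Matrix

theorem stmt_3_general (N n : ℕ)
    (f : EuclideanSpace ℝ (Fin N) → ℝ)
    (h : EuclideanSpace ℝ (Fin N) → EuclideanSpace ℝ (Fin n))
    (Dh : EuclideanSpace ℝ (Fin N) → Matrix (Fin n) (Fin N) ℝ)
    (hinv : ∀ x, IsUnit (Dh x * (Dh x)ᵀ).det)
    (H : EuclideanSpace ℝ (Fin N) → Matrix (Fin N) (Fin N) ℝ)
    (hH : ∀ x, H x = (Dh x)ᵀ * (Dh x * (Dh x)ᵀ)⁻¹ * Dh x)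
    (Ψ : EuclideanSpace ℝ (Fin N) → (Fin N → ℝ))
    (hΨ : ∀ x, Ψ x = -((Dh x)ᵀ *ᵥ (h x : EuclideanSpace ℝ (Fin n)))
      - (1 - H x) *ᵥ (gradient f x : EuclideanSpace ℝ (Fin N))) :
    ∀ x : EuclideanSpace ℝ (Fin N),
      Ψ x = 0 ↔ (h x = 0 ∧ ∃ lam : Fin n → ℝ,
        (fun i => gradient f x i) + (Dh x)ᵀ *ᵥ lam = 0) := by
  intro x
  rw [hΨ x, hH x, ← neg_add', neg_eq_zero, Matrix.mulVec_add_one_sub_mulVec_eq_zero_iff (hinv x),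
    WithLp.ofLp_eq_zero]

/-- Proposition 2.1: with `H(x) = Dh(x)ᵀ (Dh(x) Dh(x)ᵀ)⁻¹ Dh(x)` and
`Ψ(x) = -Dh(x)ᵀ h(x) - (I - H(x)) ∇f(x)`, the equilibria of `Ψ` are exactly the
solutions of the KKT system `∇f(x) + Dh(x)ᵀ λ = 0`, `h(x) = 0`. -/
theorem stmt_3 (N n : ℕ) (hN : 1 ≤ N) (hn : 1 ≤ n)
    (f : EuclideanSpace ℝ (Fin N) → ℝ)
    (h : EuclideanSpace ℝ (Fin N) → EuclideanSpace ℝ (Fin n))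
    (hf : Differentiable ℝ f) (hh : Differentiable ℝ h)
    (Dh : EuclideanSpace ℝ (Fin N) → Matrix (Fin n) (Fin N) ℝ)
    (hDh : ∀ x j i, Dh x j i = gradient (fun y => h y j) x i)
    (hinv : ∀ x, IsUnit (Dh x * (Dh x)ᵀ).det)
    (H : EuclideanSpace ℝ (Fin N) → Matrix (Fin N) (Fin N) ℝ)
    (hH : ∀ x, H x = (Dh x)ᵀ * (Dh x * (Dh x)ᵀ)⁻¹ * Dh x)
    (Ψ : EuclideanSpace ℝ (Fin N) → (Fin N → ℝ))
    (hΨ : ∀ x, Ψ x = -((Dh x)ᵀ *ᵥ (h x : EuclideanSpace ℝ (Fin n)))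
      - (1 - H x) *ᵥ (gradient f x : EuclideanSpace ℝ (Fin N))) :
    ∀ x : EuclideanSpace ℝ (Fin N),
      Ψ x = 0 ↔ (h x = 0 ∧ ∃ lam : Fin n → ℝ,
        (fun i => gradient f x i) + (Dh x)ᵀ *ᵥ lam = 0) :=
  stmt_3_general N n f h Dh hinv H hH Ψ hΨ
end

section
/- Let N, n ≥ 1, let f, g : ℝ^N → ℝ and h : ℝ^N → ℝ^n be differentiable, write Dh(x) for the n×N Jacobian matrix of h at x, assume Dh(x)·Dh(x)ᵀ is invertible, and set H(x) = Dh(x)ᵀ·(Dh(x)·Dh(x)ᵀ)⁻¹·Dh(x), Ψ⁺(x) = −Dh(x)ᵀ·h(x) − (I − H(x))·∇g(x), Ψ⁻(x) = −Dh(x)ᵀ·h(x) − (I − H(x))·∇f(x). Suppose x ∈ ℝ^N satisfies h(x) = 0, g(x) = 0, and ∇f(x) + μ·∇g(x) + Dh(x)ᵀ·λ = 0 for some μ > 0 and λ ∈ ℝ^n. Then (μ/(1+μ))·Ψ⁺(x) + (1/(1+μ))·Ψ⁻(x) = 0; in particular the zero vector is a convex combination of Ψ⁺(x) and Ψ⁻(x),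 so x is a Filippov equilibrium of the discontinuous field that equals Ψ⁺ where g > 0 and Ψ⁻ where g < 0. (Forward direction of Theorem 5.1.) -/
/-! `I − H(x)` annihilates the columns of `Dh(x)ᵀ`, so applying it to the KKT equation gives
`(I − H)∇f + μ (I − H)∇g = 0`. Since `h(x) = 0`, this says `Ψ⁻(x) + μ Ψ⁺(x) = 0`, and dividing
by `1 + μ` gives the convex combination. -/

open scoped RealInnerProductSpace Matrix

namespace Matrix

variable {m n R : Type*} [Fintype m] [Fintype n] [DecidableEq m] [DecidableEq n] [CommRing R]

theorem one_sub_transpose_mul_inv_mul_mul_transpose (A : Matrix m n R)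
    (hA : IsUnit (A * Aᵀ).det) : (1 - Aᵀ * (A * Aᵀ)⁻¹ * A) * Aᵀ = 0 := by
  rw [Matrix.sub_mul, Matrix.one_mul, Matrix.mul_assoc, Matrix.mul_assoc,
    Matrix.nonsing_inv_mul _ hA, Matrix.mul_one, sub_self]

end Matrix

theorem smul_add_smul_eq_zero_of_add_smul_eq_zero {K V : Type*} [Field K] [AddCommGroup V]
    [Module K V] {μ : K} {u v : V} (huv : u + μ • v = 0) :
    (μ / (1 + μ)) • v + (1 / (1 + μ)) • u = 0 := by
  calc (μ / (1 + μ)) • v + (1 / (1 + μ)) • u = (1 + μ)⁻¹ • (u + μ • v) := by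
        rw [smul_add, smul_smul, div_eq_inv_mul, div_eq_inv_mul, mul_one, add_comm]
    _ = 0 := by rw [huv, smul_zero]

theorem stmt_6_general (N n : ℕ)
    (f g : EuclideanSpace ℝ (Fin N) → ℝ)
    (h : EuclideanSpace ℝ (Fin N) → EuclideanSpace ℝ (Fin n))
    (Dh : EuclideanSpace ℝ (Fin N) → Matrix (Fin n) (Fin N) ℝ)
    (hinv : ∀ x, IsUnit (Dh x * (Dh x)ᵀ).det)
    (H : EuclideanSpace ℝ (Fin N) → Matrix (Fin N) (Fin N) ℝ)
    (hH : ∀ x, H x = (Dh x)ᵀ * (Dh x * (Dh x)ᵀ)⁻¹ * Dh x)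
    (Ψp Ψm : EuclideanSpace ℝ (Fin N) → (Fin N → ℝ))
    (hΨp : ∀ x, Ψp x = -((Dh x)ᵀ *ᵥ (h x : EuclideanSpace ℝ (Fin n)))
      - (1 - H x) *ᵥ (gradient g x : EuclideanSpace ℝ (Fin N)))
    (hΨm : ∀ x, Ψm x = -((Dh x)ᵀ *ᵥ (h x : EuclideanSpace ℝ (Fin n)))
      - (1 - H x) *ᵥ (gradient f x : EuclideanSpace ℝ (Fin N)))
    (x : EuclideanSpace ℝ (Fin N)) (μ : ℝ) (lam : Fin n → ℝ)
    (hfeash : h x = 0)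
    (hKKT : (fun i => gradient f x i) + μ • (fun i => gradient g x i)
      + (Dh x)ᵀ *ᵥ lam = 0) :
    (μ / (1 + μ)) • Ψp x + (1 / (1 + μ)) • Ψm x = 0 := by
  have hP : (1 - H x) * (Dh x)ᵀ = 0 :=
    hH x ▸ (Dh x).one_sub_transpose_mul_inv_mul_mul_transpose (hinv x)
  have hsum : Ψm x + μ • Ψp x = 0 :=
    calc Ψm x + μ • Ψp x
        = -((1 - H x) *ᵥ ((fun i => gradient f x i) + μ • (fun i => gradient g x i))) := by
          rw [hΨm, hΨp, hfeash, Matrix.mulVec_add, Matrix.mulVec_smul]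
          simp only [WithLp.ofLp_zero, Matrix.mulVec_zero, neg_zero, zero_sub]
          module
      _ = -((1 - H x) *ᵥ -((Dh x)ᵀ *ᵥ lam)) := by rw [eq_neg_of_add_eq_zero_left hKKT]
      _ = 0 := by rw [Matrix.mulVec_neg, Matrix.mulVec_mulVec, hP, Matrix.zero_mulVec, neg_zero,
          neg_zero]
  exact smul_add_smul_eq_zero_of_add_smul_eq_zero hsum

/-- Forward direction of Theorem 5.1: if `h(x) = 0`, `g(x) = 0` and
`∇f(x) + μ∇g(x) + Dh(x)ᵀλ = 0` with `μ > 0`, then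
`(μ/(1+μ))Ψ⁺(x) + (1/(1+μ))Ψ⁻(x) = 0`, so `0` is a convex combination of
`Ψ⁺(x)` and `Ψ⁻(x)` and `x` is a Filippov equilibrium. -/
theorem stmt_6 (N n : ℕ) (hN : 1 ≤ N) (hn : 1 ≤ n)
    (f g : EuclideanSpace ℝ (Fin N) → ℝ)
    (h : EuclideanSpace ℝ (Fin N) → EuclideanSpace ℝ (Fin n))
    (hf : Differentiable ℝ f) (hg : Differentiable ℝ g) (hh : Differentiable ℝ h)
    (Dh : EuclideanSpace ℝ (Fin N) → Matrix (Fin n) (Fin N) ℝ)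
    (hDh : ∀ x j i, Dh x j i = gradient (fun y => h y j) x i)
    (hinv : ∀ x, IsUnit (Dh x * (Dh x)ᵀ).det)
    (H : EuclideanSpace ℝ (Fin N) → Matrix (Fin N) (Fin N) ℝ)
    (hH : ∀ x, H x = (Dh x)ᵀ * (Dh x * (Dh x)ᵀ)⁻¹ * Dh x)
    (Ψp Ψm : EuclideanSpace ℝ (Fin N) → (Fin N → ℝ))
    (hΨp : ∀ x, Ψp x = -((Dh x)ᵀ *ᵥ (h x : EuclideanSpace ℝ (Fin n)))
      - (1 - H x) *ᵥ (gradient g x : EuclideanSpace ℝ (Fin N)))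
    (hΨm : ∀ x, Ψm x = -((Dh x)ᵀ *ᵥ (h x : EuclideanSpace ℝ (Fin n)))
      - (1 - H x) *ᵥ (gradient f x : EuclideanSpace ℝ (Fin N)))
    (x : EuclideanSpace ℝ (Fin N)) (μ : ℝ) (lam : Fin n → ℝ)
    (hfeash : h x = 0) (hfeasg : g x = 0) (hμ : 0 < μ)
    (hKKT : (fun i => gradient f x i) + μ • (fun i => gradient g x i)
      + (Dh x)ᵀ *ᵥ lam = 0) :
    (μ / (1 + μ)) • Ψp x + (1 / (1 + μ)) • Ψm x = 0 :=
  stmt_6_general N n f g h Dh hinv H hH Ψp Ψm hΨp hΨm x μ lam hfeash hKKT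
end

section
/- Let N, n ≥ 1, let f, g : ℝ^N → ℝ and h : ℝ^N → ℝ^n be differentiable, write Dh(x) for the n×N Jacobian matrix of h at x, assume Dh(x)·Dh(x)ᵀ is invertible, and set H(x) = Dh(x)ᵀ·(Dh(x)·Dh(x)ᵀ)⁻¹·Dh(x), Ψ⁺(x) = −Dh(x)ᵀ·h(x) − (I − H(x))·∇g(x), Ψ⁻(x) = −Dh(x)ᵀ·h(x) − (I − H(x))·∇f(x). Suppose x ∈ ℝ^N and r ∈ [0,1) satisfy r·Ψ⁺(x) + (1−r)·Ψ⁻(x) = 0. Then h(x) = 0 and there exists λ ∈ ℝ^n such that ∇f(x) + μ·∇g(x) + Dh(x)ᵀ·λ = 0 with μ = r/(1−r) ≥ 0. (Converse direction of Theorem 5.1: Filippov equilibria on the discontinuity surface solve the KKT system with a nonnegative multiplier.) -/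
open scoped RealInnerProductSpace Matrix

/-!
Write `A = Dh(x)` and `P = Aᵀ(AAᵀ)⁻¹A`, so that `A(1 - P) = 0` and `P` fixes the range of `Aᵀ`.
The hypothesis says `Aᵀh(x) + (1 - P)v = 0` for `v = r∇g(x) + (1 - r)∇f(x)`. Applying `A` kills the
second term and leaves `AAᵀh(x) = 0`, hence `h(x) = 0`; then `(1 - P)v = 0` puts `v` in the range
of `Aᵀ`, and dividing by `1 - r > 0` gives the multiplier.
-/

section RowSpaceProjection

variable {K m n : Type*} [Field K] [Fintype m] [Fintype n] [DecidableEq m] [DecidableEq n]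
  (A : Matrix m n K)

lemma mul_one_sub_rowSpaceProj_eq_zero (hA : IsUnit (A * Aᵀ).det) :
    A * (1 - Aᵀ * (A * Aᵀ)⁻¹ * A) = 0 := by
  rw [Matrix.mul_sub, Matrix.mul_one, ← Matrix.mul_assoc, ← Matrix.mul_assoc,
    Matrix.mul_nonsing_inv _ hA, Matrix.one_mul, sub_self]

lemma eq_zero_of_transpose_mulVec_add_one_sub_rowSpaceProj_mulVec_eq_zero
    (hA : IsUnit (A * Aᵀ).det) {u : m → K} {v : n → K}
    (huv : Aᵀ *ᵥ u + (1 - Aᵀ * (A * Aᵀ)⁻¹ * A) *ᵥ v = 0) : u = 0 := by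
  have hAAu : (A * Aᵀ) *ᵥ u = 0 := by
    simpa [Matrix.mulVec_add, Matrix.mulVec_mulVec, mul_one_sub_rowSpaceProj_eq_zero A hA]
      using congrArg (A *ᵥ ·) huv
  simpa [Matrix.mulVec_mulVec, Matrix.nonsing_inv_mul _ hA]
    using congrArg ((A * Aᵀ)⁻¹ *ᵥ ·) hAAu

lemma exists_transpose_mulVec_eq_of_one_sub_rowSpaceProj_mulVec_eq_zero {v : n → K}
    (hv : (1 - Aᵀ * (A * Aᵀ)⁻¹ * A) *ᵥ v = 0) : ∃ w, Aᵀ *ᵥ w = v := by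
  rw [Matrix.sub_mulVec, Matrix.one_mulVec, sub_eq_zero] at hv
  exact ⟨((A * Aᵀ)⁻¹ * A) *ᵥ v, by rw [Matrix.mulVec_mulVec, ← Matrix.mul_assoc, ← hv]⟩

end RowSpaceProjection

theorem stmt_7_general (N n : ℕ)
    (f g : EuclideanSpace ℝ (Fin N) → ℝ)
    (h : EuclideanSpace ℝ (Fin N) → EuclideanSpace ℝ (Fin n))
    (Dh : EuclideanSpace ℝ (Fin N) → Matrix (Fin n) (Fin N) ℝ)
    (hinv : ∀ x, IsUnit (Dh x * (Dh x)ᵀ).det)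
    (H : EuclideanSpace ℝ (Fin N) → Matrix (Fin N) (Fin N) ℝ)
    (hH : ∀ x, H x = (Dh x)ᵀ * (Dh x * (Dh x)ᵀ)⁻¹ * Dh x)
    (Ψp Ψm : EuclideanSpace ℝ (Fin N) → (Fin N → ℝ))
    (hΨp : ∀ x, Ψp x = -((Dh x)ᵀ *ᵥ (h x : EuclideanSpace ℝ (Fin n)))
      - (1 - H x) *ᵥ (gradient g x : EuclideanSpace ℝ (Fin N)))
    (hΨm : ∀ x, Ψm x = -((Dh x)ᵀ *ᵥ (h x : EuclideanSpace ℝ (Fin n)))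
      - (1 - H x) *ᵥ (gradient f x : EuclideanSpace ℝ (Fin N)))
    (x : EuclideanSpace ℝ (Fin N)) (r : ℝ) (hr0 : 0 ≤ r) (hr1 : r < 1)
    (hzero : r • Ψp x + (1 - r) • Ψm x = 0) :
    h x = 0 ∧ 0 ≤ r / (1 - r) ∧ ∃ lam : Fin n → ℝ,
      (fun i => gradient f x i) + (r / (1 - r)) • (fun i => gradient g x i)
        + (Dh x)ᵀ *ᵥ lam = 0 := by
  set F : Fin N → ℝ := fun i => gradient f x i
  set G : Fin N → ℝ := fun i => gradient g x i
  have hcomb : (Dh x)ᵀ *ᵥ (h x).ofLp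
      + (1 - (Dh x)ᵀ * (Dh x * (Dh x)ᵀ)⁻¹ * Dh x) *ᵥ (r • G + (1 - r) • F) = 0 := by
    rw [hΨp, hΨm, hH] at hzero
    rw [Matrix.mulVec_add, Matrix.mulVec_smul, Matrix.mulVec_smul]
    linear_combination (norm := module) -hzero
  have hhx : (h x).ofLp = 0 :=
    eq_zero_of_transpose_mulVec_add_one_sub_rowSpaceProj_mulVec_eq_zero _ (hinv x) hcomb
  rw [hhx, Matrix.mulVec_zero, zero_add] at hcomb
  obtain ⟨w, hw⟩ := exists_transpose_mulVec_eq_of_one_sub_rowSpaceProj_mulVec_eq_zero _ hcomb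
  refine ⟨WithLp.ofLp_injective 2 hhx, div_nonneg hr0 (by linarith), -(1 - r)⁻¹ • w, ?_⟩
  rw [Matrix.mulVec_smul, hw]
  have hr : 1 - r ≠ 0 := by linarith
  funext i
  simp only [Pi.add_apply, Pi.smul_apply, Pi.zero_apply, smul_eq_mul]
  field_simp
  ring

/-- Converse direction of Theorem 5.1: if `rΨ⁺(x) + (1-r)Ψ⁻(x) = 0` for some
`r ∈ [0,1)`, then `h(x) = 0` and, with `μ = r/(1-r) ≥ 0`, there is `λ` with
`∇f(x) + μ∇g(x) + Dh(x)ᵀλ = 0`. -/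
theorem stmt_7 (N n : ℕ) (hN : 1 ≤ N) (hn : 1 ≤ n)
    (f g : EuclideanSpace ℝ (Fin N) → ℝ)
    (h : EuclideanSpace ℝ (Fin N) → EuclideanSpace ℝ (Fin n))
    (hf : Differentiable ℝ f) (hg : Differentiable ℝ g) (hh : Differentiable ℝ h)
    (Dh : EuclideanSpace ℝ (Fin N) → Matrix (Fin n) (Fin N) ℝ)
    (hDh : ∀ x j i, Dh x j i = gradient (fun y => h y j) x i)
    (hinv : ∀ x, IsUnit (Dh x * (Dh x)ᵀ).det)
    (H : EuclideanSpace ℝ (Fin N) → Matrix (Fin N) (Fin N) ℝ)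
    (hH : ∀ x, H x = (Dh x)ᵀ * (Dh x * (Dh x)ᵀ)⁻¹ * Dh x)
    (Ψp Ψm : EuclideanSpace ℝ (Fin N) → (Fin N → ℝ))
    (hΨp : ∀ x, Ψp x = -((Dh x)ᵀ *ᵥ (h x : EuclideanSpace ℝ (Fin n)))
      - (1 - H x) *ᵥ (gradient g x : EuclideanSpace ℝ (Fin N)))
    (hΨm : ∀ x, Ψm x = -((Dh x)ᵀ *ᵥ (h x : EuclideanSpace ℝ (Fin n)))
      - (1 - H x) *ᵥ (gradient f x : EuclideanSpace ℝ (Fin N)))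
    (x : EuclideanSpace ℝ (Fin N)) (r : ℝ) (hr0 : 0 ≤ r) (hr1 : r < 1)
    (hzero : r • Ψp x + (1 - r) • Ψm x = 0) :
    h x = 0 ∧ 0 ≤ r / (1 - r) ∧ ∃ lam : Fin n → ℝ,
      (fun i => gradient f x i) + (r / (1 - r)) • (fun i => gradient g x i)
        + (Dh x)ᵀ *ᵥ lam = 0 :=
  stmt_7_general N n f g h Dh hinv H hH Ψp Ψm hΨp hΨm x r hr0 hr1 hzero
end

section
/- Let N, n ≥ 1, let g : ℝ^N → ℝ and h : ℝ^N → ℝ^n be differentiable, write Dh(x) for the n×N Jacobian matrix of h at x, assume Dh(x)·Dh(x)ᵀ is invertible, and set H(x) = Dh(x)ᵀ·(Dh(x)·Dh(x)ᵀ)⁻¹·Dh(x) and Ψ⁺(x) = −Dh(x)ᵀ·h(x) − (I − H(x))·∇g(x). If h(x) = 0 and ∇g(x) does not lie in the column space of Dh(x)ᵀ, then ⟨Ψ⁺(x), ∇g(x)⟩ = −‖(I − H(x))·∇g(x)‖² < 0. (The inequality (semilya): g acts as a Lyapunov function for Ψ⁺ on the region g > 0 near such points.) -/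
open scoped RealInnerProductSpace Matrix

/-!
Since `h x = 0`, `Ψ⁺ x = -P ∇g x` with `P = I - H x`. The matrix `H x` is the orthogonal projection
onto the row space of `Dh x`, so `P` is symmetric and idempotent, and then
`⟪P v, v⟫ = ⟪P v, P v⟫ = ‖P v‖²`. Finally `P ∇g x = 0` would mean `∇g x = H x ∇g x`, which lies in
the column space of `(Dh x)ᵀ`.
-/

namespace Matrix

theorem mulVec_dotProduct_self_of_transpose_mul_self {k R : Type*} [Fintype k] [CommSemiring R]
    {P : Matrix k k R} (hP : Pᵀ * P = P) (v : k → R) :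
    (P *ᵥ v) ⬝ᵥ v = (P *ᵥ v) ⬝ᵥ (P *ᵥ v) := by
  rw [dotProduct_mulVec, ← mulVec_transpose, mulVec_mulVec, hP]

variable {m k R : Type*} [Fintype m] [DecidableEq m] [Fintype k] [CommRing R]

noncomputable def rowSpaceProj (A : Matrix m k R) : Matrix k k R := Aᵀ * (A * Aᵀ)⁻¹ * A

theorem transpose_rowSpaceProj (A : Matrix m k R) : (rowSpaceProj A)ᵀ = rowSpaceProj A := by
  simp only [rowSpaceProj, transpose_mul, transpose_nonsing_inv, transpose_transpose,
    Matrix.mul_assoc]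

theorem rowSpaceProj_mul_self {A : Matrix m k R} (hA : IsUnit (A * Aᵀ).det) :
    rowSpaceProj A * rowSpaceProj A = rowSpaceProj A := by
  calc Aᵀ * (A * Aᵀ)⁻¹ * A * (Aᵀ * (A * Aᵀ)⁻¹ * A)
      = Aᵀ * ((A * Aᵀ)⁻¹ * (A * Aᵀ)) * (A * Aᵀ)⁻¹ * A := by simp only [Matrix.mul_assoc]
    _ = rowSpaceProj A := by rw [nonsing_inv_mul _ hA, Matrix.mul_one]; rfl

theorem transpose_one_sub_rowSpaceProj_mul_self [DecidableEq k] {A : Matrix m k R}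
    (hA : IsUnit (A * Aᵀ).det) :
    (1 - rowSpaceProj A)ᵀ * (1 - rowSpaceProj A) = 1 - rowSpaceProj A := by
  rw [transpose_sub, transpose_one, transpose_rowSpaceProj, Matrix.sub_mul, Matrix.mul_sub,
    Matrix.mul_sub, rowSpaceProj_mul_self hA, Matrix.one_mul, Matrix.mul_one, Matrix.one_mul]
  abel

theorem exists_eq_transpose_mulVec_of_one_sub_rowSpaceProj_mulVec_eq_zero [DecidableEq k]
    {A : Matrix m k R} {v : k → R} (hv : (1 - rowSpaceProj A) *ᵥ v = 0) : ∃ w, v = Aᵀ *ᵥ w := by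
  refine ⟨((A * Aᵀ)⁻¹ * A) *ᵥ v, ?_⟩
  rw [mulVec_mulVec, ← Matrix.mul_assoc]
  rwa [sub_mulVec, one_mulVec, sub_eq_zero] at hv

end Matrix

open Matrix in
theorem EuclideanSpace.inner_toLp_mulVec_self {k : Type*} [Fintype k] {P : Matrix k k ℝ}
    (hP : Pᵀ * P = P) (v : k → ℝ) :
    ⟪WithLp.toLp 2 (P *ᵥ v), WithLp.toLp 2 v⟫ = ‖WithLp.toLp 2 (P *ᵥ v)‖ ^ 2 := by
  rw [← real_inner_self_eq_norm_sq, EuclideanSpace.inner_toLp_toLp, EuclideanSpace.inner_toLp_toLp,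
    star_trivial, dotProduct_comm, mulVec_dotProduct_self_of_transpose_mul_self hP]

open Matrix in
theorem stmt_8_general (N n : ℕ)
    (g : EuclideanSpace ℝ (Fin N) → ℝ)
    (h : EuclideanSpace ℝ (Fin N) → EuclideanSpace ℝ (Fin n))
    (Dh : EuclideanSpace ℝ (Fin N) → Matrix (Fin n) (Fin N) ℝ)
    (hinv : ∀ x, IsUnit (Dh x * (Dh x)ᵀ).det)
    (H : EuclideanSpace ℝ (Fin N) → Matrix (Fin N) (Fin N) ℝ)
    (hH : ∀ x, H x = (Dh x)ᵀ * (Dh x * (Dh x)ᵀ)⁻¹ * Dh x)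
    (Ψp : EuclideanSpace ℝ (Fin N) → (Fin N → ℝ))
    (hΨp : ∀ x, Ψp x = -((Dh x)ᵀ *ᵥ (h x : EuclideanSpace ℝ (Fin n)))
      - (1 - H x) *ᵥ (gradient g x : EuclideanSpace ℝ (Fin N)))
    (x : EuclideanSpace ℝ (Fin N)) (hfeas : h x = 0)
    (hnotin : ¬ ∃ w : Fin n → ℝ,
      (fun i => gradient g x i) = (Dh x)ᵀ *ᵥ w) :
    ⟪(WithLp.equiv 2 (Fin N → ℝ)).symm (Ψp x), gradient g x⟫ =
      -‖(WithLp.equiv 2 (Fin N → ℝ)).symm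
          ((1 - H x) *ᵥ (gradient g x : EuclideanSpace ℝ (Fin N)))‖ ^ 2 ∧
    ⟪(WithLp.equiv 2 (Fin N → ℝ)).symm (Ψp x), gradient g x⟫ < 0 := by
  have hHx : H x = rowSpaceProj (Dh x) := hH x
  have hΨ : Ψp x = -((1 - H x) *ᵥ (gradient g x).ofLp) := by
    simp [hΨp, hfeas]
  have hPv : (1 - H x) *ᵥ (gradient g x).ofLp ≠ 0 := fun h0 =>
    hnotin (exists_eq_transpose_mulVec_of_one_sub_rowSpaceProj_mulVec_eq_zero (hHx ▸ h0))
  have key : ⟪(WithLp.equiv 2 (Fin N → ℝ)).symm (Ψp x), gradient g x⟫ =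
      -‖(WithLp.equiv 2 (Fin N → ℝ)).symm ((1 - H x) *ᵥ (gradient g x).ofLp)‖ ^ 2 := by
    rw [hΨ, WithLp.equiv_symm_apply, WithLp.toLp_neg, inner_neg_left, hHx,
      ← EuclideanSpace.inner_toLp_mulVec_self (transpose_one_sub_rowSpaceProj_mul_self (hinv x))]
  refine ⟨key, key ▸ neg_neg_of_pos (pow_pos (norm_pos_iff.2 ?_) 2)⟩
  simpa using hPv

/-- The inequality (semilya): if `h(x) = 0` and `∇g(x)` is not in the column
space of `Dh(x)ᵀ`, then `⟪Ψ⁺(x), ∇g(x)⟫ = -‖(I - H(x))∇g(x)‖² < 0`, so `g`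
acts as a Lyapunov function for `Ψ⁺` on the region `g > 0`. -/
theorem stmt_8 (N n : ℕ) (hN : 1 ≤ N) (hn : 1 ≤ n)
    (g : EuclideanSpace ℝ (Fin N) → ℝ)
    (h : EuclideanSpace ℝ (Fin N) → EuclideanSpace ℝ (Fin n))
    (hg : Differentiable ℝ g) (hh : Differentiable ℝ h)
    (Dh : EuclideanSpace ℝ (Fin N) → Matrix (Fin n) (Fin N) ℝ)
    (hDh : ∀ x j i, Dh x j i = gradient (fun y => h y j) x i)
    (hinv : ∀ x, IsUnit (Dh x * (Dh x)ᵀ).det)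
    (H : EuclideanSpace ℝ (Fin N) → Matrix (Fin N) (Fin N) ℝ)
    (hH : ∀ x, H x = (Dh x)ᵀ * (Dh x * (Dh x)ᵀ)⁻¹ * Dh x)
    (Ψp : EuclideanSpace ℝ (Fin N) → (Fin N → ℝ))
    (hΨp : ∀ x, Ψp x = -((Dh x)ᵀ *ᵥ (h x : EuclideanSpace ℝ (Fin n)))
      - (1 - H x) *ᵥ (gradient g x : EuclideanSpace ℝ (Fin N)))
    (x : EuclideanSpace ℝ (Fin N)) (hfeas : h x = 0)
    (hnotin : ¬ ∃ w : Fin n → ℝ,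
      (fun i => gradient g x i) = (Dh x)ᵀ *ᵥ w) :
    ⟪(WithLp.equiv 2 (Fin N → ℝ)).symm (Ψp x), gradient g x⟫ =
      -‖(WithLp.equiv 2 (Fin N → ℝ)).symm
          ((1 - H x) *ᵥ (gradient g x : EuclideanSpace ℝ (Fin N)))‖ ^ 2 ∧
    ⟪(WithLp.equiv 2 (Fin N → ℝ)).symm (Ψp x), gradient g x⟫ < 0 :=
  stmt_8_general N n g h Dh hinv H hH Ψp hΨp x hfeas hnotin
end

section
/- Let N, n ≥ 1, let f : ℝ^N → ℝ and h : ℝ^N → ℝ^n be differentiable, write Dh(x) for the n×N Jacobian matrix of h at x, assume Dh(x)·Dh(x)ᵀ is invertible for all x, and set H(x) = Dh(x)ᵀ·(Dh(x)·Dh(x)ᵀ)⁻¹·Dh(x) and Ψ(x) = −Dh(x)ᵀ·h(x) − (I − H(x))·∇f(x). Then for every x with h(x) = 0 one has ⟨∇f(x), Ψ(x)⟩ = −‖(I − H(x))·∇f(x)‖² ≤ 0; that is, on the feasible manifold {h = 0} the flow of Ψ does not increase f. -/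
open scoped RealInnerProductSpace Matrix

/-!
For a full-rank Jacobian `A = Dh(x)`, `H = Aᵀ (A Aᵀ)⁻¹ A` is a symmetric idempotent, and hence so
is `P = I - H`. On `{h = 0}` the field reduces to `Ψ = -P ∇f`, and for a symmetric idempotent
`⟪g, P g⟫ = ⟪P g, P g⟫ = ‖P g‖²`.
-/

namespace Matrix

variable {m n α : Type*} [Fintype m] [Fintype n] [DecidableEq m] [CommRing α]

theorem isSymm_transpose_mul_inv_mul_transpose_mul (A : Matrix m n α) :
    (Aᵀ * (A * Aᵀ)⁻¹ * A).IsSymm := by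
  rw [IsSymm, transpose_mul, transpose_mul, transpose_transpose, transpose_nonsing_inv,
    transpose_mul, transpose_transpose, Matrix.mul_assoc]

theorem isIdempotentElem_transpose_mul_inv_mul_transpose_mul (A : Matrix m n α)
    (hA : IsUnit (A * Aᵀ).det) : IsIdempotentElem (Aᵀ * (A * Aᵀ)⁻¹ * A) := by
  have hcancel : A * Aᵀ * (A * Aᵀ)⁻¹ = 1 := mul_nonsing_inv _ hA
  calc Aᵀ * (A * Aᵀ)⁻¹ * A * (Aᵀ * (A * Aᵀ)⁻¹ * A)
      = Aᵀ * (A * Aᵀ)⁻¹ * (A * Aᵀ * (A * Aᵀ)⁻¹ * A) := by simp only [Matrix.mul_assoc]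
    _ = Aᵀ * (A * Aᵀ)⁻¹ * A := by rw [hcancel, Matrix.one_mul]

theorem dotProduct_mulVec_eq_of_isSymm_of_isIdempotentElem {P : Matrix n n α} (hsymm : P.IsSymm)
    (hidem : IsIdempotentElem P) (v : n → α) : v ⬝ᵥ (P *ᵥ v) = (P *ᵥ v) ⬝ᵥ (P *ᵥ v) := by
  calc v ⬝ᵥ (P *ᵥ v) = v ⬝ᵥ (P *ᵥ (P *ᵥ v)) := by rw [mulVec_mulVec, hidem.eq]
    _ = (Pᵀ *ᵥ v) ⬝ᵥ (P *ᵥ v) := by rw [dotProduct_mulVec, mulVec_transpose]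
    _ = (P *ᵥ v) ⬝ᵥ (P *ᵥ v) := by rw [hsymm.eq]

end Matrix

theorem EuclideanSpace.inner_toLp_mulVec_eq_norm_sq {n : Type*} [Fintype n]
    {P : Matrix n n ℝ} (hsymm : P.IsSymm) (hidem : IsIdempotentElem P) (v : n → ℝ) :
    ⟪WithLp.toLp 2 v, WithLp.toLp 2 (P *ᵥ v)⟫ = ‖WithLp.toLp 2 (P *ᵥ v)‖ ^ 2 := by
  rw [← real_inner_self_eq_norm_sq, EuclideanSpace.inner_eq_star_dotProduct,
    EuclideanSpace.inner_eq_star_dotProduct]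
  simpa [dotProduct_comm] using
    Matrix.dotProduct_mulVec_eq_of_isSymm_of_isIdempotentElem hsymm hidem v

theorem stmt_10_general (N n : ℕ)
    (f : EuclideanSpace ℝ (Fin N) → ℝ)
    (h : EuclideanSpace ℝ (Fin N) → EuclideanSpace ℝ (Fin n))
    (Dh : EuclideanSpace ℝ (Fin N) → Matrix (Fin n) (Fin N) ℝ)
    (hinv : ∀ x, IsUnit (Dh x * (Dh x)ᵀ).det)
    (H : EuclideanSpace ℝ (Fin N) → Matrix (Fin N) (Fin N) ℝ)
    (hH : ∀ x, H x = (Dh x)ᵀ * (Dh x * (Dh x)ᵀ)⁻¹ * Dh x)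
    (Ψ : EuclideanSpace ℝ (Fin N) → (Fin N → ℝ))
    (hΨ : ∀ x, Ψ x = -((Dh x)ᵀ *ᵥ (h x : EuclideanSpace ℝ (Fin n)))
      - (1 - H x) *ᵥ (gradient f x : EuclideanSpace ℝ (Fin N))) :
    ∀ x : EuclideanSpace ℝ (Fin N), h x = 0 →
      ⟪gradient f x, (WithLp.equiv 2 (Fin N → ℝ)).symm (Ψ x)⟫ =
        -‖(WithLp.equiv 2 (Fin N → ℝ)).symm
            ((1 - H x) *ᵥ (gradient f x : EuclideanSpace ℝ (Fin N)))‖ ^ 2 ∧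
      ⟪gradient f x, (WithLp.equiv 2 (Fin N → ℝ)).symm (Ψ x)⟫ ≤ 0 := by
  intro x hx
  have hsymm : (1 - H x).IsSymm :=
    Matrix.isSymm_one.sub (hH x ▸ (Dh x).isSymm_transpose_mul_inv_mul_transpose_mul)
  have hidem : IsIdempotentElem (1 - H x) :=
    (hH x ▸ (Dh x).isIdempotentElem_transpose_mul_inv_mul_transpose_mul (hinv x)).one_sub
  have hΨx : Ψ x = -((1 - H x) *ᵥ (gradient f x).ofLp) := by
    simp [hΨ, hx]
  have hinner : ⟪gradient f x, (WithLp.equiv 2 (Fin N → ℝ)).symm (Ψ x)⟫ =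
      -‖(WithLp.equiv 2 (Fin N → ℝ)).symm ((1 - H x) *ᵥ (gradient f x).ofLp)‖ ^ 2 := by
    rw [hΨx, WithLp.equiv_symm_apply, WithLp.toLp_neg, inner_neg_right,
      ← EuclideanSpace.inner_toLp_mulVec_eq_norm_sq hsymm hidem, WithLp.toLp_ofLp]
  exact ⟨hinner, hinner ▸ neg_nonpos.mpr (sq_nonneg _)⟩

/-- On the feasible manifold `{h = 0}`, the flow of
`Ψ(x) = -Dh(x)ᵀ h(x) - (I - H(x)) ∇f(x)` does not increase `f`:
`⟪∇f(x), Ψ(x)⟫ = -‖(I - H(x)) ∇f(x)‖² ≤ 0`. -/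
theorem stmt_10 (N n : ℕ) (hN : 1 ≤ N) (hn : 1 ≤ n)
    (f : EuclideanSpace ℝ (Fin N) → ℝ)
    (h : EuclideanSpace ℝ (Fin N) → EuclideanSpace ℝ (Fin n))
    (hf : Differentiable ℝ f) (hh : Differentiable ℝ h)
    (Dh : EuclideanSpace ℝ (Fin N) → Matrix (Fin n) (Fin N) ℝ)
    (hDh : ∀ x j i, Dh x j i = gradient (fun y => h y j) x i)
    (hinv : ∀ x, IsUnit (Dh x * (Dh x)ᵀ).det)
    (H : EuclideanSpace ℝ (Fin N) → Matrix (Fin N) (Fin N) ℝ)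
    (hH : ∀ x, H x = (Dh x)ᵀ * (Dh x * (Dh x)ᵀ)⁻¹ * Dh x)
    (Ψ : EuclideanSpace ℝ (Fin N) → (Fin N → ℝ))
    (hΨ : ∀ x, Ψ x = -((Dh x)ᵀ *ᵥ (h x : EuclideanSpace ℝ (Fin n)))
      - (1 - H x) *ᵥ (gradient f x : EuclideanSpace ℝ (Fin N))) :
    ∀ x : EuclideanSpace ℝ (Fin N), h x = 0 →
      ⟪gradient f x, (WithLp.equiv 2 (Fin N → ℝ)).symm (Ψ x)⟫ =
        -‖(WithLp.equiv 2 (Fin N → ℝ)).symm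
            ((1 - H x) *ᵥ (gradient f x : EuclideanSpace ℝ (Fin N)))‖ ^ 2 ∧
      ⟪gradient f x, (WithLp.equiv 2 (Fin N → ℝ)).symm (Ψ x)⟫ ≤ 0 :=
  stmt_10_general N n f h Dh hinv H hH Ψ hΨ
end

section
/- Let N, n, m ≥ 1, let f : ℝ^N → ℝ, g : ℝ^N → ℝ^m, h : ℝ^N → ℝ^n be differentiable, write Dh(x) for the n×N Jacobian of h, assume Dh(x)·Dh(x)ᵀ is invertible, and set H(x) = Dh(x)ᵀ·(Dh(x)·Dh(x)ᵀ)⁻¹·Dh(x). Suppose x ∈ ℝ^N satisfies h(x) = 0, g_i(x) ≤ 0 for all i, and the KKT conditions: ∇f(x) + Σ_{i=1}^m μ_i·∇g_i(x) + Dh(x)ᵀ·λ = 0 with μ_i ≥ 0 and μ_i·g_i(x) = 0 for all i, and some λ ∈ ℝ^n. Let I = {i : g_i(x) = 0} be the active index set. Then there exist α > 0 and α_i ≥ 0 (i ∈ I) with α + Σ_{i∈I} α_i = 1 such that α·(I − H(x))·∇f(x) + Σ_{i∈I} α_i·(I − H(x))·∇g_i(x) = 0; in particular the zero vector belongs to the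 convex hull of the set {−Dh(x)ᵀ·h(x) − (I − H(x))·∇g_i(x) : i ∈ I} ∪ {−Dh(x)ᵀ·h(x) − (I − H(x))·∇f(x)}. (Forward direction of Theorem 6.1: feasible KKT points with active inequality constraints are Filippov equilibria of the discontinuous field Ψ.) -/
open scoped RealInnerProductSpace Matrix

/-! Since `I - H` annihilates the columns of `Dhᵀ`, projecting the KKT equation removes the
equality multipliers: `(I - H)∇f + Σ μᵢ (I - H)∇gᵢ = 0`. Dividing by `1 + Σ μᵢ` turns this into a
convex combination with weight `α = (1 + Σ μᵢ)⁻¹ > 0` on `∇f`, and complementary slackness puts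
the remaining weight on active constraints only. As `h x = 0`, the points of the hull are just
`-(I - H)∇gᵢ` and `-(I - H)∇f`, whose combination with these weights is `0`. -/

namespace Matrix

variable {m n R : Type*} [Fintype m] [Fintype n] [DecidableEq m] [DecidableEq n] [CommRing R]

theorem one_sub_transpose_mul_inv_mul_mulVec_transpose_mulVec (A : Matrix m n R)
    (hA : IsUnit (A * Aᵀ).det) (v : m → R) : (1 - Aᵀ * (A * Aᵀ)⁻¹ * A) *ᵥ (Aᵀ *ᵥ v) = 0 := by
  rw [mulVec_mulVec, one_sub_transpose_mul_inv_mul_mul_transpose A hA, zero_mulVec]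

end Matrix

section ConvexWeights

variable {𝕜 E ι : Type*} [Field 𝕜] [LinearOrder 𝕜] [IsStrictOrderedRing 𝕜]
  [AddCommGroup E] [Module 𝕜 E] [Fintype ι]

theorem exists_convex_weights_of_add_sum_smul_eq_zero {v : E} {w : ι → E} {μ : ι → 𝕜}
    (hμ : ∀ i, 0 ≤ μ i) (h : v + ∑ i, μ i • w i = 0) :
    ∃ (α : 𝕜) (β : ι → 𝕜), 0 < α ∧ (∀ i, 0 ≤ β i) ∧ (∀ i, μ i = 0 → β i = 0) ∧
      α + ∑ i, β i = 1 ∧ α • v + ∑ i, β i • w i = 0 := by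
  have hpos : 0 < 1 + ∑ i, μ i :=
    add_pos_of_pos_of_nonneg one_pos (Finset.sum_nonneg fun i _ => hμ i)
  refine ⟨(1 + ∑ i, μ i)⁻¹, fun i => (1 + ∑ i, μ i)⁻¹ * μ i, inv_pos.2 hpos,
    fun i => mul_nonneg (inv_pos.2 hpos).le (hμ i), fun i hi => by simp [hi], ?_, ?_⟩
  · rw [← Finset.mul_sum, ← mul_one_add, inv_mul_cancel₀ hpos.ne']
  · simp_rw [← smul_smul, ← Finset.smul_sum, ← smul_add, h, smul_zero]

theorem add_sum_smul_mem_convexHull {v : E} {w : ι → E} {s : Set ι} [DecidablePred (· ∈ s)]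
    {α : 𝕜} {β : ι → 𝕜} (hα : 0 ≤ α) (hβ : ∀ i, 0 ≤ β i) (hβs : ∀ i ∉ s, β i = 0)
    (hsum : α + ∑ i, β i = 1) :
    α • v + ∑ i, β i • w i ∈ convexHull 𝕜 (w '' s ∪ {v}) := by
  have hβsum : ∑ i ∈ Finset.univ.filter (· ∈ s), β i = ∑ i, β i :=
    Finset.sum_filter_of_ne fun i _ hi => not_not.1 fun his => hi (hβs i his)
  have hβwsum : ∑ i ∈ Finset.univ.filter (· ∈ s), β i • w i = ∑ i, β i • w i :=
    Finset.sum_filter_of_ne fun i _ hi => not_not.1 fun his => hi (by rw [hβs i his, zero_smul])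
  have key := (convex_convexHull 𝕜 (w '' s ∪ {v})).sum_mem
    (t := (Finset.univ.filter (· ∈ s)).insertNone) (w := fun o => o.elim α β)
    (z := fun o => o.elim v w) ?_ ?_ ?_
  · simpa only [Finset.sum_insertNone, Option.elim_none, Option.elim_some, hβwsum] using key
  · rintro (_ | i) _
    exacts [hα, hβ i]
  · simpa only [Finset.sum_insertNone, Option.elim_none, Option.elim_some, hβsum] using hsum
  · rintro (_ | i) hi
    · exact subset_convexHull 𝕜 _ (Or.inr rfl)
    · have his : i ∈ s := by simpa using hi
      exact subset_convexHull 𝕜 _ (Or.inl ⟨i, his, rfl⟩)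

end ConvexWeights

theorem stmt_13_general (N n m : ℕ)
    (f : EuclideanSpace ℝ (Fin N) → ℝ)
    (g : EuclideanSpace ℝ (Fin N) → EuclideanSpace ℝ (Fin m))
    (h : EuclideanSpace ℝ (Fin N) → EuclideanSpace ℝ (Fin n))
    (Dh : EuclideanSpace ℝ (Fin N) → Matrix (Fin n) (Fin N) ℝ)
    (hinv : ∀ x, IsUnit (Dh x * (Dh x)ᵀ).det)
    (H : EuclideanSpace ℝ (Fin N) → Matrix (Fin N) (Fin N) ℝ)
    (hH : ∀ x, H x = (Dh x)ᵀ * (Dh x * (Dh x)ᵀ)⁻¹ * Dh x)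
    (x : EuclideanSpace ℝ (Fin N)) (μ : Fin m → ℝ) (lam : Fin n → ℝ)
    (hfeash : h x = 0)
    (hμnn : ∀ i, 0 ≤ μ i) (hcompl : ∀ i, μ i * g x i = 0)
    (hKKT : (fun i => gradient f x i)
      + (∑ i, μ i • (fun j => gradient (fun y => g y i) x j))
      + (Dh x)ᵀ *ᵥ lam = 0) :
    (∃ (α : ℝ) (β : Fin m → ℝ),
      0 < α ∧ (∀ i, 0 ≤ β i) ∧ (∀ i, g x i ≠ 0 → β i = 0) ∧
      α + ∑ i, β i = 1 ∧
      α • ((1 - H x) *ᵥ (gradient f x : EuclideanSpace ℝ (Fin N)))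
        + ∑ i, β i • ((1 - H x) *ᵥ (fun j => gradient (fun y => g y i) x j))
        = 0) ∧
    (0 : Fin N → ℝ) ∈ convexHull ℝ
      (((fun i => -((Dh x)ᵀ *ᵥ (h x : EuclideanSpace ℝ (Fin n)))
          - (1 - H x) *ᵥ (fun j => gradient (fun y => g y i) x j)) ''
            {i : Fin m | g x i = 0}) ∪
        {-((Dh x)ᵀ *ᵥ (h x : EuclideanSpace ℝ (Fin n)))
          - (1 - H x) *ᵥ (gradient f x : EuclideanSpace ℝ (Fin N))}) := by
  classical
  have hvanish : (1 - H x) *ᵥ ((Dh x)ᵀ *ᵥ lam) = 0 :=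
    hH x ▸ Matrix.one_sub_transpose_mul_inv_mul_mulVec_transpose_mulVec _ (hinv x) lam
  have hproj := congrArg ((1 - H x) *ᵥ ·) hKKT
  simp only [Matrix.mulVec_add, Matrix.mulVec_sum, Matrix.mulVec_smul, hvanish, add_zero,
    Matrix.mulVec_zero] at hproj
  obtain ⟨α, β, hα, hβ, hβμ, hsum, hcomb⟩ :=
    exists_convex_weights_of_add_sum_smul_eq_zero hμnn hproj
  have hβg : ∀ i, g x i ≠ 0 → β i = 0 := fun i hi =>
    hβμ i ((mul_eq_zero.1 (hcompl i)).resolve_right hi)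
  refine ⟨⟨α, β, hα, hβ, hβg, hsum, hcomb⟩, ?_⟩
  have hmem := add_sum_smul_mem_convexHull (s := {i | g x i = 0})
    (v := -((1 - H x) *ᵥ ⇑(gradient f x)))
    (w := fun i => -((1 - H x) *ᵥ (fun j => gradient (fun y => g y i) x j))) hα.le hβ hβg hsum
  simpa [hfeash, smul_neg, Finset.sum_neg_distrib, ← neg_add, hcomb] using hmem

/-- Forward direction of Theorem 6.1: a feasible KKT point `x` (with `h(x)=0`,
`g(x) ≤ 0`, multipliers `μ ≥ 0`, `μᵢ gᵢ(x) = 0`) admits convex weights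
`α > 0`, `αᵢ ≥ 0` supported on the active set `I = {i : gᵢ(x) = 0}` with
`α + Σ αᵢ = 1` and `α (I-H)∇f + Σ αᵢ (I-H)∇gᵢ = 0`; in particular `0` lies in
the convex hull of `{-Dhᵀh - (I-H)∇gᵢ : i ∈ I} ∪ {-Dhᵀh - (I-H)∇f}`. -/
theorem stmt_13 (N n m : ℕ) (hN : 1 ≤ N) (hn : 1 ≤ n) (hm : 1 ≤ m)
    (f : EuclideanSpace ℝ (Fin N) → ℝ)
    (g : EuclideanSpace ℝ (Fin N) → EuclideanSpace ℝ (Fin m))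
    (h : EuclideanSpace ℝ (Fin N) → EuclideanSpace ℝ (Fin n))
    (hf : Differentiable ℝ f) (hg : Differentiable ℝ g) (hh : Differentiable ℝ h)
    (Dh : EuclideanSpace ℝ (Fin N) → Matrix (Fin n) (Fin N) ℝ)
    (hDh : ∀ x j i, Dh x j i = gradient (fun y => h y j) x i)
    (hinv : ∀ x, IsUnit (Dh x * (Dh x)ᵀ).det)
    (H : EuclideanSpace ℝ (Fin N) → Matrix (Fin N) (Fin N) ℝ)
    (hH : ∀ x, H x = (Dh x)ᵀ * (Dh x * (Dh x)ᵀ)⁻¹ * Dh x)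
    (x : EuclideanSpace ℝ (Fin N)) (μ : Fin m → ℝ) (lam : Fin n → ℝ)
    (hfeash : h x = 0) (hfeasg : ∀ i, g x i ≤ 0)
    (hμnn : ∀ i, 0 ≤ μ i) (hcompl : ∀ i, μ i * g x i = 0)
    (hKKT : (fun i => gradient f x i)
      + (∑ i, μ i • (fun j => gradient (fun y => g y i) x j))
      + (Dh x)ᵀ *ᵥ lam = 0) :
    (∃ (α : ℝ) (β : Fin m → ℝ),
      0 < α ∧ (∀ i, 0 ≤ β i) ∧ (∀ i, g x i ≠ 0 → β i = 0) ∧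
      α + ∑ i, β i = 1 ∧
      α • ((1 - H x) *ᵥ (gradient f x : EuclideanSpace ℝ (Fin N)))
        + ∑ i, β i • ((1 - H x) *ᵥ (fun j => gradient (fun y => g y i) x j))
        = 0) ∧
    (0 : Fin N → ℝ) ∈ convexHull ℝ
      (((fun i => -((Dh x)ᵀ *ᵥ (h x : EuclideanSpace ℝ (Fin n)))
          - (1 - H x) *ᵥ (fun j => gradient (fun y => g y i) x j)) ''
            {i : Fin m | g x i = 0}) ∪
        {-((Dh x)ᵀ *ᵥ (h x : EuclideanSpace ℝ (Fin n)))
          - (1 - H x) *ᵥ (gradient f x : EuclideanSpace ℝ (Fin N))}) :=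
  stmt_13_general N n m f g h Dh hinv H hH x μ lam hfeash hμnn hcompl hKKT
end

section
/- Let N, n ≥ 1, let h : ℝ^N → ℝ^n be differentiable, let x ∈ ℝ^N, write Dh(x) for the n×N Jacobian of h, assume Dh(x)·Dh(x)ᵀ is invertible, and set H(x) = Dh(x)ᵀ·(Dh(x)·Dh(x)ᵀ)⁻¹·Dh(x). Let I be a finite nonempty index set and g_i : ℝ^N → ℝ (i ∈ I) differentiable. Assume: (a) the column space of Dh(x)ᵀ and the linear span of {∇g_i(x) : i ∈ I} intersect only in {0}; and (b) the zero vector does not belong to the convex hull of {∇g_i(x) : i ∈ I}. Then there are no coefficients α_i ≥ 0 with Σ_{i∈I} α_i = 1 satisfying Σ_{i∈I} α_i·(−Dh(x)ᵀ·h(x) − (I − H(x))·∇g_i(x)) = 0. (The claim α > 0 in the proof of Theorem 6.1: the objective term must carry positive weight in any vanishing Filippov convex combination.) -/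
open scoped RealInnerProductSpace Matrix

/-!
If the weighted sum vanished, then `v = ∑ βᵢ ∇gᵢ(x)` would satisfy `(I - H) v = -Dh(x)ᵀ h(x)`,
i.e. `v = H v - Dh(x)ᵀ h(x)`, which lies in the column space of `Dh(x)ᵀ` because `H` factors
through `Dh(x)ᵀ`. Being also in the span of the gradients, `v = 0` by the transversality
assumption; but `v` is a convex combination of the gradients, contradicting `0 ∉ conv{∇gᵢ(x)}`.
-/

lemma Finset.sum_smul_sub_map_of_sum_eq_one {ι R M : Type*} [Semiring R] [AddCommGroup M]
    [Module R M] (s : Finset ι) (f : M →ₗ[R] M) (a : M) (u : ι → M) {β : ι → R}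
    (hβ : ∑ i ∈ s, β i = 1) :
    ∑ i ∈ s, β i • (a - f (u i)) = a - f (∑ i ∈ s, β i • u i) := by
  simp only [smul_sub, Finset.sum_sub_distrib, ← Finset.sum_smul, hβ, one_smul, map_sum,
    map_smul]

lemma Matrix.exists_transpose_mulVec_eq_of_neg_sub_mulVec_eq_zero {m k R : Type*}
    [Fintype m] [Fintype k] [DecidableEq k] [CommRing R]
    {A : Matrix m k R} {M : Matrix m m R} {c : m → R} {v : k → R}
    (hv : -(Aᵀ *ᵥ c) - (1 - Aᵀ * M * A) *ᵥ v = 0) :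
    ∃ w, v = Aᵀ *ᵥ w := by
  refine ⟨M *ᵥ (A *ᵥ v) - c, ?_⟩
  rw [Matrix.sub_mulVec, Matrix.one_mulVec] at hv
  rw [Matrix.mulVec_sub, Matrix.mulVec_mulVec, Matrix.mulVec_mulVec]
  linear_combination (norm := module) -hv

theorem stmt_15_general (N n : ℕ)
    (h : EuclideanSpace ℝ (Fin N) → EuclideanSpace ℝ (Fin n))
    (x : EuclideanSpace ℝ (Fin N))
    (Dh : EuclideanSpace ℝ (Fin N) → Matrix (Fin n) (Fin N) ℝ)
    (H : Matrix (Fin N) (Fin N) ℝ)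
    (hH : H = (Dh x)ᵀ * (Dh x * (Dh x)ᵀ)⁻¹ * Dh x)
    (ι : Type*) [Fintype ι]
    (g : ι → (EuclideanSpace ℝ (Fin N) → ℝ))
    (htrivial : ∀ v : Fin N → ℝ,
      (∃ w : Fin n → ℝ, v = (Dh x)ᵀ *ᵥ w) →
      v ∈ Submodule.span ℝ (Set.range fun i => (fun j => gradient (g i) x j)) →
      v = 0)
    (hhull : (0 : Fin N → ℝ) ∉
      convexHull ℝ (Set.range fun i => (fun j => gradient (g i) x j))) :
    ¬ ∃ β : ι → ℝ, (∀ i, 0 ≤ β i) ∧ ∑ i, β i = 1 ∧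
      ∑ i, β i • (-((Dh x)ᵀ *ᵥ (h x : EuclideanSpace ℝ (Fin n)))
        - (1 - H) *ᵥ (gradient (g i) x : EuclideanSpace ℝ (Fin N))) = 0 := by
  rintro ⟨β, hβ0, hβ1, hsum⟩
  set u : ι → Fin N → ℝ := fun i j => gradient (g i) x j
  set v := ∑ i, β i • u i
  have hvanish : -((Dh x)ᵀ *ᵥ (h x : Fin n → ℝ)) - (1 - H) *ᵥ v = 0 := by
    rw [← hsum]
    exact (Finset.sum_smul_sub_map_of_sum_eq_one _ (1 - H).mulVecLin _ u hβ1).symm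
  rw [hH] at hvanish
  have hcol := Matrix.exists_transpose_mulVec_eq_of_neg_sub_mulVec_eq_zero hvanish
  have hspan : v ∈ Submodule.span ℝ (Set.range u) :=
    Submodule.sum_smul_mem _ β fun i _ => Submodule.subset_span ⟨i, rfl⟩
  have hhull_mem : v ∈ convexHull ℝ (Set.range u) :=
    (convex_convexHull ℝ _).sum_mem (fun i _ => hβ0 i) hβ1
      fun i _ => subset_convexHull ℝ _ ⟨i, rfl⟩
  exact hhull (htrivial v hcol hspan ▸ hhull_mem)

/-- The claim `α > 0` in the proof of Theorem 6.1: if the column space of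
`Dh(x)ᵀ` meets the span of `{∇gᵢ(x)}` only at `0`, and `0` is not in the
convex hull of `{∇gᵢ(x)}`, then no convex combination of the vectors
`-Dh(x)ᵀh(x) - (I-H(x))∇gᵢ(x)` alone can vanish. -/
theorem stmt_15 (N n : ℕ) (hN : 1 ≤ N) (hn : 1 ≤ n)
    (h : EuclideanSpace ℝ (Fin N) → EuclideanSpace ℝ (Fin n))
    (hh : Differentiable ℝ h)
    (x : EuclideanSpace ℝ (Fin N))
    (Dh : EuclideanSpace ℝ (Fin N) → Matrix (Fin n) (Fin N) ℝ)
    (hDh : ∀ y j i, Dh y j i = gradient (fun z => h z j) y i)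
    (hinv : IsUnit (Dh x * (Dh x)ᵀ).det)
    (H : Matrix (Fin N) (Fin N) ℝ)
    (hH : H = (Dh x)ᵀ * (Dh x * (Dh x)ᵀ)⁻¹ * Dh x)
    (ι : Type*) [Fintype ι] [Nonempty ι]
    (g : ι → (EuclideanSpace ℝ (Fin N) → ℝ))
    (hgdiff : ∀ i, Differentiable ℝ (g i))
    (htrivial : ∀ v : Fin N → ℝ,
      (∃ w : Fin n → ℝ, v = (Dh x)ᵀ *ᵥ w) →
      v ∈ Submodule.span ℝ (Set.range fun i => (fun j => gradient (g i) x j)) →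
      v = 0)
    (hhull : (0 : Fin N → ℝ) ∉
      convexHull ℝ (Set.range fun i => (fun j => gradient (g i) x j))) :
    ¬ ∃ β : ι → ℝ, (∀ i, 0 ≤ β i) ∧ ∑ i, β i = 1 ∧
      ∑ i, β i • (-((Dh x)ᵀ *ᵥ (h x : EuclideanSpace ℝ (Fin n)))
        - (1 - H) *ᵥ (gradient (g i) x : EuclideanSpace ℝ (Fin N))) = 0 :=
  stmt_15_general N n h x Dh H hH ι g htrivial hhull
end

section
/- Let A be an n×N real matrix with A·Aᵀ invertible, set H = Aᵀ·(A·Aᵀ)⁻¹·A, and let c ∈ ℝ^N, a ∈ ℝ^n. Define Ψ(x) = −Aᵀ·(A·x − a) − (I − H)·c for x ∈ ℝ^N. Then Ψ(x) = 0 if and only if A·x = a and there exists λ ∈ ℝ^n with c + Aᵀ·λ = 0 (i.e. c lies in the column space of Aᵀ). (Equilibrium characterization of the field Ψ for the linear program 'minimize ⟨c, x⟩ subject to A·x = a' in the region where the inequality constraints are inactive.) -/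
open scoped Matrix

/-!
`H = Aᵀ(AAᵀ)⁻¹A` is a projection whose range is the column space of `Aᵀ`, and `A` annihilates
the range of `1 - H`. Applying `A` to `Aᵀ(Ax - a) + (1 - H)c = 0` therefore gives
`AAᵀ(Ax - a) = 0`, hence `Ax = a`, and then `(1 - H)c = 0`, i.e. `c = Hc ∈ range Aᵀ`.
-/

namespace Matrix

variable {m n R : Type*} [Fintype m] [DecidableEq m] [Fintype n] [DecidableEq n] [CommRing R]
  {A : Matrix m n R} {B : Matrix n m R}

theorem mul_one_sub_mul_inv_mul (hAB : IsUnit (A * B).det) :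
    A * (1 - B * (A * B)⁻¹ * A) = 0 := by
  rw [Matrix.mul_sub, Matrix.mul_one, ← Matrix.mul_assoc, ← Matrix.mul_assoc,
    mul_nonsing_inv _ hAB, Matrix.one_mul, sub_self]

theorem one_sub_mul_inv_mul_mul (hAB : IsUnit (A * B).det) :
    (1 - B * (A * B)⁻¹ * A) * B = 0 := by
  rw [Matrix.sub_mul, Matrix.one_mul, Matrix.mul_assoc, Matrix.mul_assoc,
    nonsing_inv_mul _ hAB, Matrix.mul_one, sub_self]

theorem one_sub_mul_inv_mul_mulVec_eq_zero_iff (hAB : IsUnit (A * B).det) (c : n → R) :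
    (1 - B * (A * B)⁻¹ * A) *ᵥ c = 0 ↔ ∃ lam : m → R, B *ᵥ lam = c := by
  constructor
  · intro hc
    refine ⟨(A * B)⁻¹ *ᵥ (A *ᵥ c), ?_⟩
    rw [sub_mulVec, one_mulVec, sub_eq_zero] at hc
    rw [mulVec_mulVec, mulVec_mulVec]
    exact hc.symm
  · rintro ⟨lam, rfl⟩
    rw [mulVec_mulVec, one_sub_mul_inv_mul_mul hAB, zero_mulVec]

theorem mulVec_add_one_sub_mul_inv_mul_mulVec_eq_zero_iff (hAB : IsUnit (A * B).det)
    (v : m → R) (c : n → R) :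
    B *ᵥ v + (1 - B * (A * B)⁻¹ * A) *ᵥ c = 0 ↔
      v = 0 ∧ (1 - B * (A * B)⁻¹ * A) *ᵥ c = 0 := by
  constructor
  · intro h
    have hABv : (A * B) *ᵥ v = 0 := by
      simpa only [mulVec_add, mulVec_mulVec, mul_one_sub_mul_inv_mul hAB, zero_mulVec,
        add_zero, mulVec_zero] using congrArg (A *ᵥ ·) h
    have hv : v = 0 := by
      simpa only [mulVec_mulVec, nonsing_inv_mul _ hAB, one_mulVec, mulVec_zero] using
        congrArg ((A * B)⁻¹ *ᵥ ·) hABv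
    subst hv
    simpa only [mulVec_zero, zero_add, true_and] using h
  · rintro ⟨rfl, hc⟩
    rw [mulVec_zero, zero_add, hc]

end Matrix

open Matrix in
/-- Equilibrium characterization of `Ψ(x) = -Aᵀ(Ax - a) - (I - H)c` (with
`H = Aᵀ(AAᵀ)⁻¹A`, `AAᵀ` invertible) for the linear program
`minimize ⟪c, x⟫ subject to Ax = a`: `Ψ(x) = 0` iff `Ax = a` and
`c + Aᵀλ = 0` for some `λ`, i.e. `c` lies in the column space of `Aᵀ`. -/
theorem stmt_16 (n N : ℕ) (A : Matrix (Fin n) (Fin N) ℝ)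
    (hA : IsUnit (A * Aᵀ).det)
    (H : Matrix (Fin N) (Fin N) ℝ) (hH : H = Aᵀ * (A * Aᵀ)⁻¹ * A)
    (c : Fin N → ℝ) (a : Fin n → ℝ)
    (Ψ : (Fin N → ℝ) → (Fin N → ℝ))
    (hΨ : ∀ x, Ψ x = -(Aᵀ *ᵥ (A *ᵥ x - a)) - (1 - H) *ᵥ c) :
    ∀ x : Fin N → ℝ,
      Ψ x = 0 ↔ (A *ᵥ x = a ∧ ∃ lam : Fin n → ℝ, c + Aᵀ *ᵥ lam = 0) := by
  intro x
  subst hH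
  have hΨ_neg : Ψ x = -(Aᵀ *ᵥ (A *ᵥ x - a) + (1 - Aᵀ * (A * Aᵀ)⁻¹ * A) *ᵥ c) := by
    rw [hΨ, neg_add, sub_eq_add_neg]
  have hc_range : (∃ lam, Aᵀ *ᵥ lam = c) ↔ ∃ lam, c + Aᵀ *ᵥ lam = 0 :=
    ⟨fun ⟨lam, h⟩ => ⟨-lam, by rw [mulVec_neg, h, add_neg_cancel]⟩,
      fun ⟨lam, h⟩ => ⟨-lam, by rw [mulVec_neg, neg_eq_of_add_eq_zero_left h]⟩⟩
  rw [hΨ_neg, neg_eq_zero, mulVec_add_one_sub_mul_inv_mul_mulVec_eq_zero_iff hA,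
    one_sub_mul_inv_mul_mulVec_eq_zero_iff hA, sub_eq_zero, hc_range]
end
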